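/- Uniform relative bound on the trajectories: Fix an integer N ≥ 1, intensities a_1,…,a_N ∈ ℝ∖{0} such that Σ_{i∈A} a_i ≠ 0 for every nonempty proper subset A ⊊ {1,…,N} (the total sum Σ_{i=1}^N a_i may vanish), a final time T > 0, and a constant M ≥ 0. Then there exists a constant C > 0, depending only on N, the intensities a_i, T and M, such that for every kernel profile G : (0,∞) → ℝ that is differentiable with locally Lipschitz derivative on (0,∞), whose derivative is Lipschitz on [1,∞), with sup_{r≥1} |G'(r)| ≤ M, and for every solution (x_1,…,x_N) of the point-vortex system with kernel G on [0,T) with no collapse, one has sup_{t∈[0,T)} diam(x_1(t),…,x_N(t)) ≤ diam(x_1(0),…,x_N(0)) + C, where diam(y_1,…,y_N) = max_{i≠j} |y_i − y_j|. -/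

import Mathlib

open Filter MeasureTheory

noncomputable section

/-- The plane `ℝ²`. -/
abbrev Plane : Type := EuclideanSpace ℝ (Fin 2)

/-- Counterclockwise rotation by `π/2`: `(v₁, v₂)^⊥ = (−v₂, v₁)`. -/
def perp (v : Plane) : Plane := WithLp.toLp 2 ![-v 1, v 0]

/-- `∇^⊥_y K(|y|) = K'(|y|) y^⊥ / |y|` for a radial kernel profile `K`. -/
def gradPerp (K : ℝ → ℝ) (y : Plane) : Plane := (deriv K ‖y‖ / ‖y‖) • perp y

/-- A solution of the point-vortex system with intensities `a`, kernel profile `G`,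
on the time interval `[0, T)`, with no collapse. -/
def IsVortexSolution (N : ℕ) (a : Fin N → ℝ) (G : ℝ → ℝ) (T : ℝ)
    (x : Fin N → ℝ → Plane) : Prop :=
  (∀ t ∈ Set.Ico (0 : ℝ) T, ∀ i j : Fin N, i ≠ j → x i t ≠ x j t) ∧
  ∀ i : Fin N, ∀ t ∈ Set.Ico (0 : ℝ) T,
    HasDerivWithinAt (x i)
      (∑ j ∈ Finset.univ.erase i, a j • gradPerp G (x i t - x j t))
      (Set.Ico 0 T) t

/-- The kernel regularity used in the paper: `G ∈ C^{1,1}_loc((0,∞)) ∩ C^{1,1}([1,∞))`,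
i.e. `G` is differentiable on `(0,∞)`, with locally Lipschitz derivative there,
and with Lipschitz derivative on `[1,∞)`. -/
def KernelRegular (G : ℝ → ℝ) : Prop :=
  DifferentiableOn ℝ G (Set.Ioi 0) ∧
  (∀ s : Set ℝ, IsCompact s → s ⊆ Set.Ioi 0 → ∃ L : NNReal, LipschitzOnWith L (deriv G) s) ∧
  (∃ L : NNReal, LipschitzOnWith L (deriv G) (Set.Ici 1))

/-!
Induction on the size of a cluster `P` of vortices that stays at distance `≥ 1` from all the
others. A proper subcluster `A` has nonzero total intensity `Γ_A`, hence a centre of vorticity.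
If `A` is isolated, the interactions inside `A` cancel in the motion of its centre and those with
the outside are bounded by `M`, so the centre moves at speed `≤ V² M / |Γ_A|`
(`V = ∑ |a i|`), while every vortex of `A` stays within `V diam A / |Γ_A|` of it.

Split `P` into single-linkage clusters. As long as they stay `1`-apart each of them is isolated,
its diameter is controlled by the induction hypothesis, and so every vortex moves by a bounded
amount plus a term linear in time. When two clusters meet, re-cluster at a larger scale: the
number of clusters drops, so this happens fewer than `N` times. The clusters are proper subsets
of `P` as long as `diam P` is above a threshold, and the argument is run from the last time
`diam P` was below it.
-/

open Set
open scoped Finset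

theorem Finset.sum_sum_eq_zero_of_antisymm {ι E : Type*} [AddCommGroup E] [Module ℝ E]
    (s : Finset ι) (f : ι → ι → E) (hf : ∀ i j, f i j = -f j i) :
    ∑ i ∈ s, ∑ j ∈ s, f i j = 0 := by
  have hneg : ∑ i ∈ s, ∑ j ∈ s, f i j = -∑ i ∈ s, ∑ j ∈ s, f i j :=
    calc ∑ i ∈ s, ∑ j ∈ s, f i j = ∑ j ∈ s, ∑ i ∈ s, f i j := Finset.sum_comm
      _ = -∑ j ∈ s, ∑ i ∈ s, f j i := by
        simp only [← Finset.sum_neg_distrib]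
        exact Finset.sum_congr rfl fun j _ => Finset.sum_congr rfl fun i _ => hf i j
  have htwo : (2 : ℝ) • ∑ i ∈ s, ∑ j ∈ s, f i j = 0 := by
    rw [two_smul]
    nth_rewrite 2 [hneg]
    exact add_neg_cancel _
  exact (smul_eq_zero.1 htwo).resolve_left two_ne_zero

lemma dist_centerMass_le {ι E : Type*} [NormedAddCommGroup E] [NormedSpace ℝ E]
    (A : Finset ι) (w : ι → ℝ) (y : ι → E) (z : E) (hw : ∑ k ∈ A, w k ≠ 0) :
    dist z (A.centerMass w y) ≤ (∑ k ∈ A, |w k| * dist z (y k)) / |∑ k ∈ A, w k| := by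
  have hsub : z - A.centerMass w y = (∑ k ∈ A, w k)⁻¹ • ∑ k ∈ A, w k • (z - y k) := by
    simp only [Finset.centerMass, smul_sub, Finset.sum_sub_distrib, ← Finset.sum_smul,
      inv_smul_smul₀ hw]
  rw [dist_eq_norm, hsub, norm_smul, norm_inv, Real.norm_eq_abs, inv_mul_eq_div]
  gcongr
  refine (norm_sum_le _ _).trans_eq (Finset.sum_congr rfl fun k _ => ?_)
  rw [norm_smul, Real.norm_eq_abs, dist_eq_norm]

lemma dist_centerMass_le_mul_diam {ι E : Type*} [Fintype ι] [NormedAddCommGroup E]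
    [NormedSpace ℝ E] {A : Finset ι} (w : ι → ℝ) (y : ι → E) (hw : ∑ k ∈ A, w k ≠ 0) {p : ι}
    (hp : p ∈ A) :
    dist (y p) (A.centerMass w y) ≤ (∑ i, |w i|) * Metric.diam (y '' A) / |∑ k ∈ A, w k| := by
  refine (dist_centerMass_le A w y (y p) hw).trans (div_le_div_of_nonneg_right ?_ (abs_nonneg _))
  calc ∑ k ∈ A, |w k| * dist (y p) (y k) ≤ ∑ k ∈ A, |w k| * Metric.diam (y '' A) := by
        gcongr with k hk
        exact Metric.dist_le_diam_of_mem (A.finite_toSet.image y).isBounded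
          (mem_image_of_mem y hp) (mem_image_of_mem y hk)
    _ ≤ ∑ i, |w i| * Metric.diam (y '' A) :=
        Finset.sum_le_sum_of_subset_of_nonneg (Finset.subset_univ A) fun _ _ _ =>
          mul_nonneg (abs_nonneg _) Metric.diam_nonneg
    _ = (∑ i, |w i|) * Metric.diam (y '' A) := (Finset.sum_mul _ _ _).symm

/-- A common bound for all the `|∑_{i ∈ A} a i|⁻¹`; a cluster of zero intensity contributes
`0⁻¹ = 0`. -/
def invIntensityBound {ι : Type*} [Fintype ι] (a : ι → ℝ) : ℝ := ∑ A : Finset ι, |∑ i ∈ A, a i|⁻¹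

lemma inv_abs_sum_le_invIntensityBound {ι : Type*} [Fintype ι] (a : ι → ℝ) (A : Finset ι) :
    |∑ i ∈ A, a i|⁻¹ ≤ invIntensityBound a :=
  Finset.single_le_sum (f := fun A : Finset ι => |∑ i ∈ A, a i|⁻¹)
    (fun _ _ => inv_nonneg.2 (abs_nonneg _)) (Finset.mem_univ A)

lemma invIntensityBound_nonneg {ι : Type*} [Fintype ι] (a : ι → ℝ) : 0 ≤ invIntensityBound a :=
  Finset.sum_nonneg fun _ _ => inv_nonneg.2 (abs_nonneg _)

theorem Finpartition.card_parts_lt_of_lt {α : Type*} [DecidableEq α] {s : Finset α}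
    {P Q : Finpartition s} (h : P < Q) : #Q.parts < #P.parts := by
  refine (Finpartition.card_mono h.le).lt_of_ne fun hcard => h.not_ge ?_
  choose f hfQ hbf using (h.le : ∀ ⦃b⦄, b ∈ P.parts → ∃ c ∈ Q.parts, b ≤ c)
  have hmem : ∀ b (hb : b ∈ P.parts) {y}, y ∈ b → y ∈ f hb := fun b hb _ hy => hbf hb hy
  have hsurj : ∀ c ∈ Q.parts, ∃ b, ∃ hb : b ∈ P.parts, f hb = c := by
    intro c hc
    obtain ⟨b, hb, hbc⟩ := Finpartition.exists_le_of_le h.le hc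
    obtain ⟨y, hy⟩ := P.nonempty_of_mem_parts hb
    exact ⟨b, hb, Q.eq_of_mem_parts (hfQ hb) hc (hmem b hb hy) (hbc hy)⟩
  have hinj := Finset.inj_on_of_surj_on_of_card_le (fun b hb => f hb) (fun _ hb => hfQ hb) hsurj
    hcard.ge
  intro c hc
  obtain ⟨b, hb, rfl⟩ := hsurj c hc
  refine ⟨b, hb, fun y hy => ?_⟩
  obtain ⟨b', hb', hyb'⟩ := P.exists_mem (Q.le hc hy)
  rwa [hinj hb' hb (Q.eq_of_mem_parts (hfQ hb') (hfQ hb) (hmem b' hb' hyb') hy)] at hyb'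

theorem exists_first_le_of_continuousOn {ι : Type*} (S : Finset ι) {f : ι → ℝ → ℝ} {a b c : ℝ}
    (hab : a ≤ b) (hf : ∀ q ∈ S, ContinuousOn (f q) (Icc a b)) (ha : ∀ q ∈ S, c ≤ f q a) :
    ∃ τ ∈ Icc a b, (∀ u ∈ Icc a τ, ∀ q ∈ S, c ≤ f q u) ∧ (τ = b ∨ ∃ q ∈ S, f q τ ≤ c) := by
  set H := {u ∈ Icc a b | ∃ q ∈ S, f q u ≤ c}
  have hbefore : ∀ u ∈ Icc a b, (∀ v ∈ H, u ≤ v) → ∀ q ∈ S, c ≤ f q u := by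
    intro u hu hlow q hq
    by_contra! hlt
    obtain ⟨v, hv, hfv⟩ := intermediate_value_Icc' hu.1
      ((hf q hq).mono (Icc_subset_Icc_right hu.2)) ⟨hlt.le, ha q hq⟩
    have hvu : v = u := le_antisymm hv.2 (hlow v ⟨⟨hv.1, hv.2.trans hu.2⟩, q, hq, hfv.le⟩)
    exact hlt.ne (hvu ▸ hfv)
  rcases H.eq_empty_or_nonempty with hH | hH
  · exact ⟨b, right_mem_Icc.2 hab, fun u hu => hbefore u hu (by simp [hH]), Or.inl rfl⟩
  have hclosed : IsClosed H := by
    have hH : H = ⋃ q ∈ S, Icc a b ∩ f q ⁻¹' Iic c := by ext u; simp [H]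
    rw [hH]
    exact isClosed_biUnion_finset fun q hq =>
      (hf q hq).preimage_isClosed_of_isClosed isClosed_Icc isClosed_Iic
  have hbdd : BddBelow H := ⟨a, fun v hv => hv.1.1⟩
  obtain ⟨hτ, q, hq, hfq⟩ := hclosed.csInf_mem hH hbdd
  exact ⟨sInf H, hτ, fun u hu => hbefore u ⟨hu.1, hu.2.trans hτ.2⟩ fun v hv =>
    hu.2.trans (csInf_le hbdd hv), Or.inr ⟨q, hq, hfq⟩⟩

theorem exists_last_le_of_continuousOn {f : ℝ → ℝ} {a b R : ℝ} (hab : a ≤ b)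
    (hf : ContinuousOn f (Icc a b)) (hb : R ≤ f b) :
    ∃ t₀ ∈ Icc a b, f t₀ ≤ max (f a) R ∧ ∀ u ∈ Icc t₀ b, R ≤ f u := by
  set H := {u ∈ Icc a b | f u ≤ R}
  have hafter : ∀ u ∈ Icc a b, (∀ v ∈ H, v ≤ u) → R ≤ f u := by
    intro u hu hup
    by_contra! hlt
    obtain ⟨v, hv, hfv⟩ := intermediate_value_Icc hu.2 (hf.mono (Icc_subset_Icc_left hu.1))
      ⟨hlt.le, hb⟩
    have hvu : v = u := le_antisymm (hup v ⟨⟨hu.1.trans hv.1, hv.2⟩, hfv.le⟩) hv.1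
    exact hlt.ne (hvu ▸ hfv)
  rcases H.eq_empty_or_nonempty with hH | hH
  · exact ⟨a, left_mem_Icc.2 hab, le_max_left _ _, fun u hu => hafter u hu (by simp [hH])⟩
  have hclosed : IsClosed H := hf.preimage_isClosed_of_isClosed isClosed_Icc isClosed_Iic
  have hbdd : BddAbove H := ⟨b, fun v hv => hv.1.2⟩
  obtain ⟨hτ, hfτ⟩ := hclosed.csSup_mem hH hbdd
  exact ⟨sSup H, hτ, hfτ.trans (le_max_right _ _), fun u hu =>
    hafter u ⟨hτ.1.trans hu.1, hu.2⟩ fun v hv => (le_csSup hbdd hv).trans hu.1⟩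

section ClusterDiam

variable {ι E : Type*} [PseudoMetricSpace E]

lemma diam_image_le_diam_image_add_dist [Fintype ι] (s : Set ι) (y z : ι → E) :
    Metric.diam (y '' s) ≤ Metric.diam (z '' s) + 2 * dist y z := by
  refine Metric.diam_le_of_forall_dist_le (add_nonneg Metric.diam_nonneg (by positivity)) ?_
  rintro _ ⟨i, hi, rfl⟩ _ ⟨j, hj, rfl⟩
  have hz : dist (z i) (z j) ≤ Metric.diam (z '' s) :=
    Metric.dist_le_diam_of_mem (s.toFinite.image z).isBounded (mem_image_of_mem z hi)
      (mem_image_of_mem z hj)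
  have hj' : dist (z j) (y j) ≤ dist y z := (dist_comm (z j) (y j)).trans_le (dist_le_pi_dist y z j)
  linarith [dist_triangle4 (y i) (z i) (z j) (y j), dist_le_pi_dist y z i]

lemma lipschitzWith_diam_image [Fintype ι] (s : Set ι) :
    LipschitzWith 2 fun y : ι → E => Metric.diam (y '' s) :=
  LipschitzWith.of_le_add_mul 2 fun y z => by
    simpa using diam_image_le_diam_image_add_dist s y z

def clusterDiam (x : ι → ℝ → E) (A : Finset ι) (u : ℝ) : ℝ := Metric.diam ((x · u) '' A)

variable {x : ι → ℝ → E} {A : Finset ι} {u : ℝ}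

lemma clusterDiam_nonneg : 0 ≤ clusterDiam x A u := Metric.diam_nonneg

lemma dist_le_clusterDiam {i j : ι} (hi : i ∈ A) (hj : j ∈ A) :
    dist (x i u) (x j u) ≤ clusterDiam x A u :=
  Metric.dist_le_diam_of_mem (A.finite_toSet.image _).isBounded (mem_image_of_mem _ hi)
    (mem_image_of_mem _ hj)

lemma clusterDiam_le {C : ℝ} (hC : 0 ≤ C) (h : ∀ i ∈ A, ∀ j ∈ A, dist (x i u) (x j u) ≤ C) :
    clusterDiam x A u ≤ C :=
  Metric.diam_le_of_forall_dist_le hC <| by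
    rintro _ ⟨i, hi, rfl⟩ _ ⟨j, hj, rfl⟩
    exact h i hi j hj

lemma continuousOn_clusterDiam [Fintype ι] {I : Set ℝ} (hx : ∀ i, ContinuousOn (x i) I) :
    ContinuousOn (clusterDiam x A) I :=
  (lipschitzWith_diam_image _).continuous.comp_continuousOn (continuousOn_pi.2 hx)

def IsIsolatedOn (x : ι → ℝ → E) (A : Finset ι) (I : Set ℝ) : Prop :=
  ∀ u ∈ I, ∀ k ∈ A, ∀ l ∉ A, 1 ≤ dist (x k u) (x l u)

lemma IsIsolatedOn.mono {I J : Set ℝ} (h : IsIsolatedOn x A I) (hJ : J ⊆ I) :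
    IsIsolatedOn x A J :=
  fun u hu => h u (hJ hu)

lemma IsIsolatedOn.of_mem_parts [DecidableEq ι] {P : Finset ι} {I : Set ℝ} (Q : Finpartition P)
    (hP : IsIsolatedOn x P I)
    (hQ : ∀ u ∈ I, ∀ i ∈ P, ∀ j ∈ P, Q.part i ≠ Q.part j → 1 ≤ dist (x i u) (x j u))
    (hA : A ∈ Q.parts) : IsIsolatedOn x A I := by
  intro u hu k hk l hl
  by_cases hlP : l ∈ P
  · refine hQ u hu k (Q.subset hA hk) l hlP fun hkl => hl ?_
    rw [← Q.part_eq_of_mem hA hk, hkl]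
    exact Q.mem_part_self.2 hlP
  · exact hP u hu k (Q.subset hA hk) l hlP

theorem exists_first_meeting [DecidableEq ι] {P : Finset ι} (Q : Finpartition P) {τ t : ℝ}
    (hτt : τ ≤ t) (hx : ∀ i, ContinuousOn (x i) (Icc τ t))
    (h₀ : ∀ i ∈ P, ∀ j ∈ P, Q.part i ≠ Q.part j → 1 ≤ dist (x i τ) (x j τ)) :
    ∃ τ' ∈ Icc τ t,
      (∀ u ∈ Icc τ τ', ∀ i ∈ P, ∀ j ∈ P, Q.part i ≠ Q.part j → 1 ≤ dist (x i u) (x j u)) ∧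
      (τ' = t ∨ ∃ i ∈ P, ∃ j ∈ P, Q.part i ≠ Q.part j ∧ dist (x i τ') (x j τ') ≤ 1) := by
  obtain ⟨τ', hτ', hsep, hend⟩ := exists_first_le_of_continuousOn
    ((P ×ˢ P).filter fun q => Q.part q.1 ≠ Q.part q.2) hτt (c := 1)
    (f := fun q u => dist (x q.1 u) (x q.2 u))
    (fun q _ => continuous_dist.comp_continuousOn ((hx q.1).prodMk (hx q.2)))
    fun q hq => by
      simp only [Finset.mem_filter, Finset.mem_product] at hq
      exact h₀ _ hq.1.1 _ hq.1.2 hq.2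
  refine ⟨τ', hτ', fun u hu i hi j hj hij => hsep u hu (i, j) (by simp [hi, hj, hij]),
    hend.imp_right ?_⟩
  rintro ⟨⟨i, j⟩, hij, hd⟩
  simp only [Finset.mem_filter, Finset.mem_product] at hij
  exact ⟨i, hij.1.1, j, hij.1.2, hij.2, hd⟩

end ClusterDiam

section LinkGraph

variable {ι E : Type*} [PseudoMetricSpace E]

def linkGraph (y : ι → E) (s : ℝ) : SimpleGraph ι where
  Adj i j := i ≠ j ∧ dist (y i) (y j) ≤ s
  symm := ⟨fun _ _ h => ⟨h.1.symm, (dist_comm _ _).trans_le h.2⟩⟩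
  loopless := ⟨fun _ h => h.1 rfl⟩

variable {y : ι → E} {s : ℝ}

lemma linkGraph_adj {i j : ι} : (linkGraph y s).Adj i j ↔ i ≠ j ∧ dist (y i) (y j) ≤ s := Iff.rfl

lemma linkGraph_reachable_of_dist_le {i j : ι} (h : dist (y i) (y j) ≤ s) :
    (linkGraph y s).Reachable i j := by
  by_cases hij : i = j
  · exact hij ▸ SimpleGraph.Reachable.refl i
  · exact SimpleGraph.Adj.reachable (linkGraph_adj.2 ⟨hij, h⟩)

lemma dist_le_length_mul_of_walk {i j : ι} :
    ∀ w : (linkGraph y s).Walk i j, dist (y i) (y j) ≤ w.length * s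
  | .nil => by simp
  | .cons (v := k) h w => by
    rw [SimpleGraph.Walk.length_cons, Nat.cast_succ]
    linarith [dist_triangle (y i) (y k) (y j), (linkGraph_adj.1 h).2, dist_le_length_mul_of_walk w]

lemma dist_le_card_mul_of_reachable [Fintype ι] [DecidableEq ι] (hs : 0 ≤ s) {i j : ι}
    (h : (linkGraph y s).Reachable i j) : dist (y i) (y j) ≤ Fintype.card ι * s := by
  obtain ⟨w⟩ := h
  calc dist (y i) (y j) ≤ w.bypass.length * s := dist_le_length_mul_of_walk _
    _ ≤ Fintype.card ι * s := by
        gcongr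
        exact_mod_cast w.bypass_isPath.length_lt.le

variable [DecidableEq ι]

variable (y s) in
open Classical in
def clusterPartition (P : Finset ι) : Finpartition P :=
  Finpartition.ofSetSetoid (linkGraph y s).reachableSetoid P

variable {P : Finset ι}

lemma mem_part_clusterPartition {i j : ι} :
    j ∈ (clusterPartition y s P).part i ↔ i ∈ P ∧ j ∈ P ∧ (linkGraph y s).Reachable i j := by
  classical
  exact Finpartition.mem_part_ofSetSetoid_iff_rel P

lemma diam_image_le_of_mem_parts_clusterPartition [Fintype ι] (hs : 0 ≤ s) {A : Finset ι}
    (hA : A ∈ (clusterPartition y s P).parts) : Metric.diam (y '' A) ≤ Fintype.card ι * s := by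
  refine Metric.diam_le_of_forall_dist_le (by positivity) ?_
  rintro _ ⟨i, hi, rfl⟩ _ ⟨j, hj, rfl⟩
  rw [← (clusterPartition y s P).part_eq_of_mem hA hi] at hj
  exact dist_le_card_mul_of_reachable hs (mem_part_clusterPartition.1 hj).2.2

lemma lt_dist_of_part_clusterPartition_ne {i j : ι} (hi : i ∈ P) (hj : j ∈ P)
    (hij : (clusterPartition y s P).part i ≠ (clusterPartition y s P).part j) :
    s < dist (y i) (y j) := by
  by_contra! hle
  refine hij ((clusterPartition y s P).part_eq_of_mem ?_ ?_).symm
  · exact (clusterPartition y s P).part_mem.2 hi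
  · exact mem_part_clusterPartition.2 ⟨hi, hj, linkGraph_reachable_of_dist_le hle⟩

lemma card_parts_clusterPartition_lt (Q : Finpartition P)
    (hQ : ∀ A ∈ Q.parts, ∀ i ∈ A, ∀ j ∈ A, dist (y i) (y j) ≤ s) {i j : ι} (hi : i ∈ P)
    (hj : j ∈ P) (hij : Q.part i ≠ Q.part j) (hd : dist (y i) (y j) ≤ s) :
    #(clusterPartition y s P).parts < #Q.parts := by
  refine Finpartition.card_parts_lt_of_lt (lt_of_le_of_ne (fun A hA => ?_) fun hQ' => hij ?_)
  · obtain ⟨p, hp⟩ := Q.nonempty_of_mem_parts hA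
    refine ⟨_, (clusterPartition y s P).part_mem.2 (Q.subset hA hp), fun q hq => ?_⟩
    exact mem_part_clusterPartition.2 ⟨Q.subset hA hp, Q.subset hA hq,
      linkGraph_reachable_of_dist_le (hQ A hA p hp q hq)⟩
  · rw [hQ']
    exact ((clusterPartition y s P).part_eq_of_mem ((clusterPartition y s P).part_mem.2 hi)
      (mem_part_clusterPartition.2 ⟨hi, hj, linkGraph_reachable_of_dist_le hd⟩)).symm

end LinkGraph

/-- The scale of the `k`-th clustering. A part of diameter `≤ N s` grows to at most `N s + C`
while it stays isolated, and then lies in a single cluster at the next scale. -/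
def vortexScale (N : ℕ) (C : ℝ) : ℕ → ℝ
  | 0 => 1
  | k + 1 => (N + 1) * vortexScale N C k + C

section VortexScale

variable {N : ℕ} {C : ℝ}

lemma one_le_vortexScale (hC : 0 ≤ C) : ∀ k, 1 ≤ vortexScale N C k
  | 0 => le_rfl
  | k + 1 => by
    have := one_le_vortexScale hC k
    show 1 ≤ (N + 1) * vortexScale N C k + C
    nlinarith [(N.cast_nonneg : (0 : ℝ) ≤ N)]

lemma vortexScale_mono (hC : 0 ≤ C) : Monotone (vortexScale N C) :=
  monotone_nat_of_le_succ fun k => by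
    have := one_le_vortexScale (N := N) hC k
    show vortexScale N C k ≤ (N + 1) * vortexScale N C k + C
    nlinarith [(N.cast_nonneg : (0 : ℝ) ≤ N)]

lemma mul_vortexScale_add_le (hC : 0 ≤ C) (k : ℕ) :
    N * vortexScale N C k + C ≤ vortexScale N C (k + 1) := by
  rw [vortexScale]
  linarith [one_le_vortexScale (N := N) hC k]

end VortexScale

def HasDiamGrowthLE {ι E : Type*} [PseudoMetricSpace E] (x : ι → ℝ → E) (T C : ℝ)
    (A : Finset ι) : Prop :=
  ∀ t₁ t, t₁ ≤ t → Icc t₁ t ⊆ Ico 0 T → IsIsolatedOn x A (Icc t₁ t) →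
    clusterDiam x A t ≤ clusterDiam x A t₁ + C

def growthConst {N : ℕ} (a : Fin N → ℝ) (M T : ℝ) : ℕ → ℝ
  | 0 => 0
  | m + 1 =>
    let s := vortexScale N (growthConst a M T m) N
    s + 1 + N * (4 * (∑ i, |a i|) * invIntensityBound a * s)
      + 2 * (∑ i, |a i|) ^ 2 * M * invIntensityBound a * T

lemma perp_neg (v : Plane) : perp (-v) = -perp v := by
  ext i
  fin_cases i <;> simp [perp]

lemma norm_perp (v : Plane) : ‖perp v‖ = ‖v‖ := by
  simp only [EuclideanSpace.norm_eq, Fin.sum_univ_two]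
  have h0 : perp v 0 = -v 1 := rfl
  have h1 : perp v 1 = v 0 := rfl
  rw [h0, h1, norm_neg, add_comm]

lemma gradPerp_neg (K : ℝ → ℝ) (y : Plane) : gradPerp K (-y) = -gradPerp K y := by
  rw [gradPerp, gradPerp, norm_neg, perp_neg, smul_neg]

lemma gradPerp_zero (K : ℝ → ℝ) : gradPerp K 0 = 0 := by
  simp [gradPerp]

lemma norm_gradPerp_le {K : ℝ → ℝ} {M : ℝ} (hK : ∀ r, 1 ≤ r → |deriv K r| ≤ M) {y : Plane}
    (hy : 1 ≤ ‖y‖) : ‖gradPerp K y‖ ≤ M := by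
  have hy0 : 0 < ‖y‖ := one_pos.trans_le hy
  rw [gradPerp, norm_smul, norm_perp, Real.norm_eq_abs, abs_div, abs_of_pos hy0,
    div_mul_cancel₀ _ hy0.ne']
  exact hK _ hy

section VortexSystem

variable {N : ℕ} {a : Fin N → ℝ} {G : ℝ → ℝ} {T M : ℝ} {x : Fin N → ℝ → Plane}

lemma sum_smul_velocity_eq_sum_compl (y : Fin N → Plane) (A : Finset (Fin N)) :
    ∑ k ∈ A, a k • ∑ j ∈ Finset.univ.erase k, a j • gradPerp G (y k - y j) =
      ∑ k ∈ A, ∑ l ∈ Aᶜ, (a k * a l) • gradPerp G (y k - y l) := by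
  have hinner : ∑ k ∈ A, ∑ l ∈ A, (a k * a l) • gradPerp G (y k - y l) = 0 :=
    Finset.sum_sum_eq_zero_of_antisymm A _ fun k l => by
      rw [← neg_sub, gradPerp_neg, smul_neg, mul_comm]
  calc ∑ k ∈ A, a k • ∑ j ∈ Finset.univ.erase k, a j • gradPerp G (y k - y j)
      = ∑ k ∈ A, ∑ l, (a k * a l) • gradPerp G (y k - y l) := by
        refine Finset.sum_congr rfl fun k _ => ?_
        rw [Finset.sum_erase _ (by rw [sub_self, gradPerp_zero, smul_zero]), Finset.smul_sum]
        simp only [smul_smul]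
    _ = ∑ k ∈ A, ∑ l ∈ A, (a k * a l) • gradPerp G (y k - y l)
          + ∑ k ∈ A, ∑ l ∈ Aᶜ, (a k * a l) • gradPerp G (y k - y l) := by
        simp only [← Finset.sum_add_distrib, Finset.sum_add_sum_compl]
    _ = _ := by rw [hinner, zero_add]

lemma norm_sum_compl_le (hG : ∀ r, 1 ≤ r → |deriv G r| ≤ M) (y : Fin N → Plane)
    (A : Finset (Fin N)) (hsep : ∀ k ∈ A, ∀ l ∉ A, 1 ≤ ‖y k - y l‖) :
    ‖∑ k ∈ A, ∑ l ∈ Aᶜ, (a k * a l) • gradPerp G (y k - y l)‖ ≤ (∑ i, |a i|) ^ 2 * M := by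
  have hM : 0 ≤ M := (abs_nonneg _).trans (hG 1 le_rfl)
  calc ‖∑ k ∈ A, ∑ l ∈ Aᶜ, (a k * a l) • gradPerp G (y k - y l)‖
      ≤ ∑ k ∈ A, ∑ l ∈ Aᶜ, |a k| * |a l| * M := by
        refine (norm_sum_le _ _).trans (Finset.sum_le_sum fun k hk => ?_)
        refine (norm_sum_le _ _).trans (Finset.sum_le_sum fun l hl => ?_)
        rw [norm_smul, Real.norm_eq_abs, abs_mul]
        exact mul_le_mul_of_nonneg_left
          (norm_gradPerp_le hG (hsep k hk l (Finset.mem_compl.1 hl))) (by positivity)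
    _ ≤ ∑ k, ∑ l, |a k| * |a l| * M := by
        refine (Finset.sum_le_sum fun k _ => Finset.sum_le_sum_of_subset_of_nonneg
          (Finset.subset_univ _) fun _ _ _ => by positivity).trans
          (Finset.sum_le_sum_of_subset_of_nonneg (Finset.subset_univ _) fun _ _ _ =>
            Finset.sum_nonneg fun _ _ => by positivity)
    _ = (∑ i, |a i|) ^ 2 * M := by
        rw [sq, Finset.sum_mul_sum, Finset.sum_mul]
        simp only [Finset.sum_mul]

lemma IsVortexSolution.continuousOn (hsol : IsVortexSolution N a G T x) (i : Fin N) :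
    ContinuousOn (x i) (Ico 0 T) :=
  fun t ht => (hsol.2 i t ht).continuousWithinAt

lemma norm_sum_smul_sub_le (hsol : IsVortexSolution N a G T x)
    (hG : ∀ r, 1 ≤ r → |deriv G r| ≤ M) {A : Finset (Fin N)} {τ t : ℝ} (hτt : τ ≤ t)
    (hI : Icc τ t ⊆ Ico 0 T)
    (hsep : ∀ u ∈ Icc τ t, ∀ k ∈ A, ∀ l ∉ A, 1 ≤ dist (x k u) (x l u)) :
    ‖∑ k ∈ A, a k • x k t - ∑ k ∈ A, a k • x k τ‖ ≤ (∑ i, |a i|) ^ 2 * M * (t - τ) := by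
  have hderiv : ∀ u ∈ Icc τ t, HasDerivWithinAt (fun u => ∑ k ∈ A, a k • x k u)
      (∑ k ∈ A, ∑ l ∈ Aᶜ, (a k * a l) • gradPerp G (x k u - x l u)) (Icc τ t) u := by
    intro u hu
    rw [← sum_smul_velocity_eq_sum_compl]
    exact HasDerivWithinAt.fun_sum fun k _ => ((hsol.2 k u (hI hu)).mono hI).const_smul (a k)
  have hbound : ∀ u ∈ Icc τ t,
      ‖∑ k ∈ A, ∑ l ∈ Aᶜ, (a k * a l) • gradPerp G (x k u - x l u)‖ ≤ (∑ i, |a i|) ^ 2 * M :=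
    fun u hu => norm_sum_compl_le hG _ A fun k hk l hl => by
      rw [← dist_eq_norm]; exact hsep u hu k hk l hl
  simpa [Real.norm_eq_abs, abs_of_nonneg (sub_nonneg.2 hτt)] using
    (convex_Icc τ t).norm_image_sub_le_of_norm_hasDerivWithin_le hderiv hbound
      (left_mem_Icc.2 hτt) (right_mem_Icc.2 hτt)

lemma dist_le_of_isIsolatedOn (hsol : IsVortexSolution N a G T x)
    (hG : ∀ r, 1 ≤ r → |deriv G r| ≤ M) {A : Finset (Fin N)} (hA : ∑ k ∈ A, a k ≠ 0)
    {τ t : ℝ} (hτt : τ ≤ t) (hI : Icc τ t ⊆ Ico 0 T) (hiso : IsIsolatedOn x A (Icc τ t))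
    {p : Fin N} (hp : p ∈ A) :
    dist (x p t) (x p τ) ≤ ((∑ i, |a i|) * (clusterDiam x A t + clusterDiam x A τ)
      + (∑ i, |a i|) ^ 2 * M * (t - τ)) / |∑ k ∈ A, a k| := by
  set c : ℝ → Plane := fun u => A.centerMass a (x · u)
  have hspread : ∀ u, dist (x p u) (c u) ≤ (∑ i, |a i|) * clusterDiam x A u / |∑ k ∈ A, a k| :=
    fun u => dist_centerMass_le_mul_diam a (x · u) hA hp
  have hdrift : dist (c t) (c τ) ≤ (∑ i, |a i|) ^ 2 * M * (t - τ) / |∑ k ∈ A, a k| := by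
    simp only [c, Finset.centerMass, dist_eq_norm]
    rw [← smul_sub, norm_smul, norm_inv, Real.norm_eq_abs, inv_mul_eq_div]
    gcongr
    exact norm_sum_smul_sub_le hsol hG hτt hI hiso
  calc dist (x p t) (x p τ) ≤ dist (x p t) (c t) + dist (c t) (c τ) + dist (c τ) (x p τ) :=
        dist_triangle4 _ _ _ _
    _ ≤ _ := by
        rw [dist_comm (c τ), mul_add, add_div, add_div]
        linarith [hspread t, hspread τ]

lemma clusterDiam_le_of_parts_isolated (hsol : IsVortexSolution N a G T x)
    (hG : ∀ r, 1 ≤ r → |deriv G r| ≤ M) {P : Finset (Fin N)} (Q : Finpartition P) {τ t Δ : ℝ}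
    (hτt : τ ≤ t) (hI : Icc τ t ⊆ Ico 0 T) (hΔ : 0 ≤ Δ)
    (hQ : ∀ A ∈ Q.parts, ∑ k ∈ A, a k ≠ 0 ∧ IsIsolatedOn x A (Icc τ t) ∧
      clusterDiam x A t ≤ Δ ∧ clusterDiam x A τ ≤ Δ) :
    clusterDiam x P t ≤ clusterDiam x P τ + 4 * (∑ i, |a i|) * invIntensityBound a * Δ
      + 2 * (∑ i, |a i|) ^ 2 * M * invIntensityBound a * (t - τ) := by
  have hM : 0 ≤ M := (abs_nonneg _).trans (hG 1 le_rfl)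
  have hκ := invIntensityBound_nonneg a
  have hτt' : 0 ≤ t - τ := sub_nonneg.2 hτt
  have hdisp : ∀ p ∈ P, dist (x p t) (x p τ) ≤ 2 * (∑ i, |a i|) * invIntensityBound a * Δ
      + (∑ i, |a i|) ^ 2 * M * invIntensityBound a * (t - τ) := by
    intro p hp
    obtain ⟨hA, hiso, ht, hτ⟩ := hQ _ (Q.part_mem.2 hp)
    calc dist (x p t) (x p τ)
        ≤ ((∑ i, |a i|) * (clusterDiam x (Q.part p) t + clusterDiam x (Q.part p) τ)
          + (∑ i, |a i|) ^ 2 * M * (t - τ)) / |∑ k ∈ Q.part p, a k| :=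
          dist_le_of_isIsolatedOn hsol hG hA hτt hI hiso (Q.mem_part_self.2 hp)
      _ ≤ ((∑ i, |a i|) * (Δ + Δ) + (∑ i, |a i|) ^ 2 * M * (t - τ)) * invIntensityBound a := by
          rw [div_eq_mul_inv]
          gcongr
          exact inv_abs_sum_le_invIntensityBound a _
      _ = _ := by ring
  refine clusterDiam_le (add_nonneg (add_nonneg clusterDiam_nonneg (by positivity)) (by positivity))
    fun i hi j hj => ?_
  calc dist (x i t) (x j t) ≤ dist (x i t) (x i τ) + dist (x i τ) (x j τ) + dist (x j τ) (x j t) :=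
        dist_triangle4 _ _ _ _
    _ ≤ _ := by
        rw [dist_comm (x j τ)]
        linarith [hdisp i hi, hdisp j hj, dist_le_clusterDiam (x := x) (u := τ) hi hj]

lemma clusterDiam_le_of_parts_separated (hsol : IsVortexSolution N a G T x)
    (hG : ∀ r, 1 ≤ r → |deriv G r| ≤ M)
    (hcluster : ∀ P : Finset (Fin N), P.Nonempty → P ≠ Finset.univ → ∑ i ∈ P, a i ≠ 0)
    {m : ℕ} {Cm : ℝ} (hCm : 0 ≤ Cm)
    (hIH : ∀ A : Finset (Fin N), #A ≤ m → HasDiamGrowthLE x T Cm A)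
    {P : Finset (Fin N)} (hP : #P ≤ m + 1) (Q : Finpartition P) {τ e D : ℝ} (hτe : τ ≤ e)
    (hI : Icc τ e ⊆ Ico 0 T) (hiso : IsIsolatedOn x P (Icc τ e))
    (hsep : ∀ u ∈ Icc τ e, ∀ i ∈ P, ∀ j ∈ P, Q.part i ≠ Q.part j → 1 ≤ dist (x i u) (x j u))
    (hD : 0 ≤ D) (hstart : ∀ A ∈ Q.parts, clusterDiam x A τ ≤ D) (hbig : D < clusterDiam x P τ) :
    (∀ A ∈ Q.parts, clusterDiam x A e ≤ D + Cm) ∧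
      clusterDiam x P e ≤ clusterDiam x P τ + 4 * (∑ i, |a i|) * invIntensityBound a * (D + Cm)
        + 2 * (∑ i, |a i|) ^ 2 * M * invIntensityBound a * (e - τ) := by
  have hparts : ∀ A ∈ Q.parts, ∑ k ∈ A, a k ≠ 0 ∧ IsIsolatedOn x A (Icc τ e) ∧
      clusterDiam x A e ≤ D + Cm ∧ clusterDiam x A τ ≤ D + Cm := by
    intro A hA
    have hAP : A ⊂ P := (Q.subset hA).ssubset_of_ne fun h => (hstart A hA).not_gt (h ▸ hbig)
    have hisoA := hiso.of_mem_parts Q hsep hA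
    have hgrowth := hIH A (by have := Finset.card_lt_card hAP; omega) τ e hτe hI hisoA
    refine ⟨hcluster A (Q.nonempty_of_mem_parts hA) fun h => hAP.2 (h ▸ Finset.subset_univ P),
      hisoA, ?_, ?_⟩ <;> linarith [hstart A hA]
  exact ⟨fun A hA => (hparts A hA).2.2.1,
    clusterDiam_le_of_parts_isolated hsol hG Q hτe hI (by linarith) hparts⟩

/-- Induction on the number `n` of parts: follow them until two of them meet, then re-cluster at
the next scale, which merges these two. The threshold keeps every part a proper subset of `P`. -/
lemma clusterDiam_le_of_forall_threshold_le (hsol : IsVortexSolution N a G T x)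
    (hG : ∀ r, 1 ≤ r → |deriv G r| ≤ M)
    (hcluster : ∀ P : Finset (Fin N), P.Nonempty → P ≠ Finset.univ → ∑ i ∈ P, a i ≠ 0)
    {m : ℕ} {Cm : ℝ} (hCm : 0 ≤ Cm)
    (hIH : ∀ A : Finset (Fin N), #A ≤ m → HasDiamGrowthLE x T Cm A)
    {P : Finset (Fin N)} (hP : #P ≤ m + 1) (n : ℕ) :
    ∀ k : ℕ, k + n ≤ N → ∀ (Q : Finpartition P) {τ t : ℝ}, #Q.parts ≤ n → τ ≤ t →
      Icc τ t ⊆ Ico 0 T → IsIsolatedOn x P (Icc τ t) →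
      (∀ u ∈ Icc τ t, vortexScale N Cm N + 1 ≤ clusterDiam x P u) →
      (∀ A ∈ Q.parts, clusterDiam x A τ ≤ N * vortexScale N Cm k) →
      (∀ i ∈ P, ∀ j ∈ P, Q.part i ≠ Q.part j → 1 ≤ dist (x i τ) (x j τ)) →
      clusterDiam x P t ≤ clusterDiam x P τ
        + n * (4 * (∑ i, |a i|) * invIntensityBound a * vortexScale N Cm N)
        + 2 * (∑ i, |a i|) ^ 2 * M * invIntensityBound a * (t - τ) := by
  have hM : 0 ≤ M := (abs_nonneg _).trans (hG 1 le_rfl)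
  have hκ := invIntensityBound_nonneg a
  induction n with
  | zero =>
    intro k _ Q τ t hQ hτt _ _ hlarge _ _
    have hPe : P = ∅ := by
      simpa using Finpartition.parts_eq_empty_iff.1 (Finset.card_eq_zero.1 (Nat.le_zero.1 hQ))
    have hτ := hlarge τ (left_mem_Icc.2 hτt)
    simp only [hPe, clusterDiam, Finset.coe_empty, image_empty, Metric.diam_empty] at hτ
    linarith [one_le_vortexScale (N := N) hCm N]
  | succ n ih =>
    intro k hkn Q τ t hQ hτt hI hiso hlarge hstart hsep₀
    have hsk : N * vortexScale N Cm k + Cm ≤ vortexScale N Cm N :=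
      (mul_vortexScale_add_le hCm k).trans (vortexScale_mono hCm (by omega))
    obtain ⟨τ', hτ', hsep, hend⟩ :=
      exists_first_meeting Q hτt (fun i => (hsol.continuousOn i).mono hI) hsep₀
    have hsub : Icc τ τ' ⊆ Icc τ t := Icc_subset_Icc_right hτ'.2
    obtain ⟨hparts, hphase⟩ := clusterDiam_le_of_parts_separated hsol hG hcluster hCm hIH hP Q
      hτ'.1 (hsub.trans hI) (hiso.mono hsub)
      hsep (mul_nonneg N.cast_nonneg (zero_le_one.trans (one_le_vortexScale hCm k)))
      hstart (by linarith [hlarge τ (left_mem_Icc.2 hτt)])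
    have hcost : 4 * (∑ i, |a i|) * invIntensityBound a * (N * vortexScale N Cm k + Cm)
        ≤ 4 * (∑ i, |a i|) * invIntensityBound a * vortexScale N Cm N := by gcongr
    have hn : 0 ≤ (n : ℝ) * (4 * (∑ i, |a i|) * invIntensityBound a * vortexScale N Cm N) := by
      have := one_le_vortexScale (N := N) hCm N
      positivity
    rcases hend with rfl | ⟨i, hi, j, hj, hij, hd⟩
    · push_cast
      linarith
    have hs1 := one_le_vortexScale (N := N) hCm (k + 1)
    have hQ' : #(clusterPartition (x · τ') (vortexScale N Cm (k + 1)) P).parts ≤ n := by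
      have := card_parts_clusterPartition_lt Q (fun A hA p hp q hq =>
        (dist_le_clusterDiam hp hq).trans ((hparts A hA).trans (mul_vortexScale_add_le hCm k)))
        hi hj hij (hd.trans hs1)
      omega
    have hsub' : Icc τ' t ⊆ Icc τ t := Icc_subset_Icc_left hτ'.1
    have hnext := ih (k + 1) (by omega) _ hQ' hτ'.2 (hsub'.trans hI) (hiso.mono hsub')
      (fun u hu => hlarge u (hsub' hu))
      (fun A hA => (diam_image_le_of_mem_parts_clusterPartition (by linarith) hA).trans_eq
        (by rw [Fintype.card_fin]))
      (fun p hp q hq hpq => hs1.trans (lt_dist_of_part_clusterPartition_ne hp hq hpq).le)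
    push_cast
    linarith

lemma hasDiamGrowthLE_succ (hsol : IsVortexSolution N a G T x)
    (hG : ∀ r, 1 ≤ r → |deriv G r| ≤ M)
    (hcluster : ∀ P : Finset (Fin N), P.Nonempty → P ≠ Finset.univ → ∑ i ∈ P, a i ≠ 0)
    {m : ℕ} {Cm : ℝ} (hCm : 0 ≤ Cm)
    (hIH : ∀ A : Finset (Fin N), #A ≤ m → HasDiamGrowthLE x T Cm A)
    {P : Finset (Fin N)} (hP : #P ≤ m + 1) :
    HasDiamGrowthLE x T (vortexScale N Cm N + 1
      + N * (4 * (∑ i, |a i|) * invIntensityBound a * vortexScale N Cm N)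
      + 2 * (∑ i, |a i|) ^ 2 * M * invIntensityBound a * T) P := by
  intro t₁ t ht₁t hI hiso
  have hM : 0 ≤ M := (abs_nonneg _).trans (hG 1 le_rfl)
  have hκ := invIntensityBound_nonneg a
  have ht₁ := hI (left_mem_Icc.2 ht₁t)
  have ht := hI (right_mem_Icc.2 ht₁t)
  have hs := one_le_vortexScale (N := N) hCm N
  have hcost : 0 ≤ N * (4 * (∑ i, |a i|) * invIntensityBound a * vortexScale N Cm N) := by
    positivity
  have hT : 0 ≤ T := ht₁.1.trans ht₁.2.le
  have hD₁ : 0 ≤ clusterDiam x P t₁ := clusterDiam_nonneg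
  by_cases hsmall : clusterDiam x P t ≤ vortexScale N Cm N + 1
  · have : 0 ≤ 2 * (∑ i, |a i|) ^ 2 * M * invIntensityBound a * T := by positivity
    linarith
  obtain ⟨t₀, ht₀, ht₀le, hlarge⟩ := exists_last_le_of_continuousOn ht₁t
    (continuousOn_clusterDiam fun i => (hsol.continuousOn i).mono hI) (not_le.1 hsmall).le
  have hsub : Icc t₀ t ⊆ Icc t₁ t := Icc_subset_Icc_left ht₀.1
  have hmain := clusterDiam_le_of_forall_threshold_le hsol hG hcluster hCm hIH hP N 0 (by omega)
    (clusterPartition (x · t₀) 1 P)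
    ((clusterPartition (x · t₀) 1 P).card_parts_le_card.trans
      (by simpa using Finset.card_le_univ P)) ht₀.2
    (hsub.trans hI) (hiso.mono hsub) hlarge
    (fun A hA => (diam_image_le_of_mem_parts_clusterPartition zero_le_one hA).trans_eq
      (by simp [vortexScale]))
    (fun p hp q hq hpq => (lt_dist_of_part_clusterPartition_ne hp hq hpq).le)
  have hdrift : 2 * (∑ i, |a i|) ^ 2 * M * invIntensityBound a * (t - t₀)
      ≤ 2 * (∑ i, |a i|) ^ 2 * M * invIntensityBound a * T := by
    gcongr
    linarith [ht₀.1, ht.2, ht₁.1]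
  have ht₀le' : clusterDiam x P t₀ ≤ clusterDiam x P t₁ + (vortexScale N Cm N + 1) :=
    ht₀le.trans (max_le (by linarith) (by linarith))
  linarith

lemma growthConst_nonneg (hM : 0 ≤ M) (hT : 0 ≤ T) : ∀ m, 0 ≤ growthConst a M T m
  | 0 => le_rfl
  | m + 1 => by
    have hs := one_le_vortexScale (N := N) (growthConst_nonneg hM hT m) N
    have hκ := invIntensityBound_nonneg a
    simp only [growthConst]
    positivity

lemma hasDiamGrowthLE_growthConst (hsol : IsVortexSolution N a G T x)
    (hG : ∀ r, 1 ≤ r → |deriv G r| ≤ M)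
    (hcluster : ∀ P : Finset (Fin N), P.Nonempty → P ≠ Finset.univ → ∑ i ∈ P, a i ≠ 0)
    (hT : 0 ≤ T) :
    ∀ (m : ℕ) (A : Finset (Fin N)), #A ≤ m → HasDiamGrowthLE x T (growthConst a M T m) A
  | 0, A, hA => by
    rw [Finset.card_eq_zero.1 (Nat.le_zero.1 hA)]
    intro _ _ _ _ _
    simp [clusterDiam, growthConst]
  | m + 1, _, hP =>
    hasDiamGrowthLE_succ hsol hG hcluster
      (growthConst_nonneg ((abs_nonneg _).trans (hG 1 le_rfl)) hT m)
      (hasDiamGrowthLE_growthConst hsol hG hcluster hT m) hP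

theorem uniform_relative_bound_on_trajectories_general
    (N : ℕ) (a : Fin N → ℝ)
    (hcluster : ∀ P : Finset (Fin N), P.Nonempty → P ≠ Finset.univ → ∑ i ∈ P, a i ≠ 0)
    (T : ℝ) (hT : 0 < T) (M : ℝ) (hM : 0 ≤ M) :
    ∃ C > (0 : ℝ), ∀ G : ℝ → ℝ, KernelRegular G →
      (∀ r : ℝ, 1 ≤ r → |deriv G r| ≤ M) →
      ∀ x : Fin N → ℝ → Plane, IsVortexSolution N a G T x →
        ∀ t ∈ Set.Ico (0 : ℝ) T, ∀ i j : Fin N,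
          ‖x i t - x j t‖ ≤ (⨆ k : Fin N, ⨆ l : Fin N, ‖x k 0 - x l 0‖) + C := by
  refine ⟨growthConst a M T N + 1, by linarith [growthConst_nonneg (a := a) hM hT.le N], ?_⟩
  intro G _ hG x hsol t ht i j
  have hgrowth := hasDiamGrowthLE_growthConst hsol hG hcluster hT.le N Finset.univ
    (by simp) 0 t ht.1 (fun u hu => ⟨hu.1, hu.2.trans_lt ht.2⟩)
    (fun _ _ _ _ l hl => absurd (Finset.mem_univ l) hl)
  have hbdd : ∀ k : Fin N, BddAbove (range fun l => ‖x k 0 - x l 0‖) :=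
    fun _ => (finite_range _).bddAbove
  have hinit : clusterDiam x Finset.univ 0 ≤ ⨆ k : Fin N, ⨆ l : Fin N, ‖x k 0 - x l 0‖ :=
    clusterDiam_le (Real.iSup_nonneg fun _ => Real.iSup_nonneg fun _ => norm_nonneg _)
      fun k _ l _ => (dist_eq_norm _ _).trans_le <| (le_ciSup (hbdd k) l).trans <|
        le_ciSup (f := fun k => ⨆ l : Fin N, ‖x k 0 - x l 0‖) (finite_range _).bddAbove k
  calc ‖x i t - x j t‖ = dist (x i t) (x j t) := (dist_eq_norm _ _).symm
    _ ≤ clusterDiam x Finset.univ t := dist_le_clusterDiam (Finset.mem_univ i) (Finset.mem_univ j)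
    _ ≤ _ := by linarith

/-- Uniform relative bound on the trajectories: under the non-neutral *proper* cluster
hypothesis (the total sum of intensities may vanish), the diameter
`max_{i,j} |x_i(t) − x_j(t)|` of the vortex system exceeds its initial value by at most a
constant `C` depending only on `N`, the intensities, `T` and the bound `M` on
`sup_{r≥1} |G'(r)|`. -/
theorem uniform_relative_bound_on_trajectories
    (N : ℕ) (hN : 1 ≤ N) (a : Fin N → ℝ) (ha : ∀ i, a i ≠ 0)
    (hcluster : ∀ P : Finset (Fin N), P.Nonempty → P ≠ Finset.univ → ∑ i ∈ P, a i ≠ 0)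
    (T : ℝ) (hT : 0 < T) (M : ℝ) (hM : 0 ≤ M) :
    ∃ C > (0 : ℝ), ∀ G : ℝ → ℝ, KernelRegular G →
      (∀ r : ℝ, 1 ≤ r → |deriv G r| ≤ M) →
      ∀ x : Fin N → ℝ → Plane, IsVortexSolution N a G T x →
        ∀ t ∈ Set.Ico (0 : ℝ) T, ∀ i j : Fin N,
          ‖x i t - x j t‖ ≤ (⨆ k : Fin N, ⨆ l : Fin N, ‖x k 0 - x l 0‖) + C :=
  uniform_relative_bound_on_trajectories_general N a hcluster T hT M hM
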